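/- arXiv:2005.07738 — 12 statements merged into one kernel-verified Lean document; each statement's English description precedes it below -/
import Mathlib

section
/- Let V be a commutative unital quantale and (X,a,+) a V-group. If (Y,b,+) is a V-group and f : X → Y is a group homomorphism, then f is a V-functor if and only if a(0,x) ≤ b(0,f(x)) for all x ∈ X. -/
/-- a group homomorphism between `V`-groups is a `V`-functor iff
`a(0,x) ≤ b(0,f(x))` for all `x`. -/
theorem VGroup_hom_VFunctor_iff {V : Type*} [CompleteLattice V] [CommMonoid V]
    (hsup : ∀ (u : V) (S : Set V), u * sSup S = ⨆ v ∈ S, u * v)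
    {X Y : Type*} [AddGroup X] [AddGroup Y]
    (a : X → X → V) (b : Y → Y → V)
    (harefl : ∀ x, (1 : V) ≤ a x x)
    (hatrans : ∀ x y z, a x y * a y z ≤ a x z)
    (hashift : ∀ x x' x'' : X, a x' x'' = a (x' + x) (x'' + x))
    (hbrefl : ∀ y, (1 : V) ≤ b y y)
    (hbtrans : ∀ x y z, b x y * b y z ≤ b x z)
    (hbshift : ∀ y y' y'' : Y, b y' y'' = b (y' + y) (y'' + y))
    (f : X → Y) (hf : ∀ x x', f (x + x') = f x + f x') :
    (∀ x x', a x x' ≤ b (f x) (f x')) ↔ (∀ x, a 0 x ≤ b 0 (f x)) := by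
  have hf0 : f 0 = 0 := by
    have h : f 0 = f 0 + f 0 := by simpa using hf 0 0
    exact (left_eq_add.mp h)
  have hfneg : ∀ x, f (-x) = -f x := by
    intro x
    have : f (-x) + f x = 0 := by rw [← hf]; simp [hf0]
    exact eq_neg_of_add_eq_zero_left this
  constructor
  · intro h x
    have := h 0 x
    rwa [hf0] at this
  · intro h x x'
    have h1 : a x x' = a 0 (x' - x) := by
      have := hashift x 0 (x' - x)
      simpa using this.symm
    have h2 : b 0 (f (x' - x)) = b (f x) (f x') := by
      have := hbshift (f x) 0 (f x' - f x)
      rw [sub_eq_add_neg, hf, hfneg, ← sub_eq_add_neg]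
      simpa using this
    rw [h1, ← h2]
    exact h _
end

section
/- Let V be a frame (a complete lattice with ⊗ = ∧, k = ⊤, in which arbitrary joins distribute over finite meets) and let (X,a,+) be a V-group whose underlying group X is finite. Then a is symmetric: a(x,y) = a(y,x) for all x,y. -/
/-- over a frame `V` (tensor = meet, unit = top), every `V`-group structure
on a finite group is symmetric. -/
theorem finite_VGroup_symmetric {V : Type*} [Order.Frame V]
    {X : Type*} [AddGroup X] [Finite X] (a : X → X → V)
    (hrefl : ∀ x, (⊤ : V) ≤ a x x)
    (htrans : ∀ x y z, a x y ⊓ a y z ≤ a x z)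
    (hshift : ∀ x x' x'' : X, a x' x'' = a (x' + x) (x'' + x)) :
    ∀ x y : X, a x y = a y x := by
  -- a 0 (n • z) ≥ a 0 z for n ≥ 1
  have hnsmul : ∀ (z : X) (n : ℕ), 1 ≤ n → a 0 z ≤ a 0 (n • z) := by
    intro z n hn
    induction n with
    | zero => omega
    | succ m ih =>
      rcases Nat.eq_zero_or_pos m with hm | hm
      · subst hm; simp
      · have h1 : a 0 z = a (m • z) ((m + 1) • z) := by
          rw [hshift (m • z) 0 z]
          congr 1
          · simp
          · rw [succ_nsmul']
        calc a 0 z ≤ a 0 (m • z) ⊓ a (m • z) ((m + 1) • z) :=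
              le_inf (ih hm) h1.le
          _ ≤ a 0 ((m + 1) • z) := htrans _ _ _
  have hneg : ∀ z : X, a 0 z ≤ a 0 (-z) := by
    intro z
    have hord : (addOrderOf z) • z = 0 := addOrderOf_nsmul_eq_zero z
    have hpos : 1 ≤ addOrderOf z := addOrderOf_pos z
    rcases Nat.exists_eq_add_of_le hpos with ⟨m, hm⟩
    rcases Nat.eq_zero_or_pos m with hm0 | hm0
    · have hz : z = 0 := by
        have := hord; rw [hm, hm0] at this; simpa using this
      simp [hz]
    · have hmz : m • z = -z := by
        have h : z + m • z = 0 := by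
          have := hord
          rw [hm, add_comm 1 m, succ_nsmul'] at this; exact this
        exact eq_neg_of_add_eq_zero_right h
      calc a 0 z ≤ a 0 (m • z) := hnsmul z m hm0
        _ = a 0 (-z) := by rw [hmz]
  intro x y
  have key : ∀ u w : X, a u w = a 0 (w - u) := by
    intro u w
    rw [hshift (-u) u w]
    congr 1
    · simp
    · rw [sub_eq_add_neg]
  rw [key x y, key y x]
  refine le_antisymm ?_ ?_
  · have := hneg (y - x); rwa [neg_sub] at this
  · have := hneg (x - y); rwa [neg_sub] at this
end

section
/- Let V be a commutative unital quantale, (X,a,+) a V-group, Y a group, and f : X → Y a surjective group homomorphism. Define b : Y × Y → V by b(y₁,y₂) = ⋁ { a(x₁,x₂) : f(x₁)=y₁, f(x₂)=y₂ }. Then (Y,b,+) is a V-group and f : (X,a) → (Y,b) is a V-functor. -/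
/-- the final structure along a surjective homomorphism from a `V`-group
makes the codomain a `V`-group and the map a `V`-functor. -/
theorem final_structure_VGroup {V : Type*} [CompleteLattice V] [CommMonoid V]
    (hsup : ∀ (u : V) (S : Set V), u * sSup S = ⨆ v ∈ S, u * v)
    {X Y : Type*} [AddGroup X] [AddGroup Y]
    (a : X → X → V)
    (harefl : ∀ x, (1 : V) ≤ a x x)
    (hatrans : ∀ x y z, a x y * a y z ≤ a x z)
    (hashift : ∀ x x' x'' : X, a x' x'' = a (x' + x) (x'' + x))
    (f : X → Y) (hf : ∀ x x', f (x + x') = f x + f x')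
    (hsurj : Function.Surjective f)
    (b : Y → Y → V)
    (hb : ∀ y₁ y₂, b y₁ y₂ = sSup {v | ∃ x₁ x₂, f x₁ = y₁ ∧ f x₂ = y₂ ∧ v = a x₁ x₂}) :
    (∀ y, (1 : V) ≤ b y y) ∧
    (∀ y₁ y₂ y₃, b y₁ y₂ * b y₂ y₃ ≤ b y₁ y₃) ∧
    (∀ y y' y'' : Y, b y' y'' = b (y' + y) (y'' + y)) ∧
    (∀ x x', a x x' ≤ b (f x) (f x')) := by
  have hf0 : f 0 = 0 := by
    have := hf 0 0
    simp at this
    exact this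
  have hfneg : ∀ x, f (-x) = - f x := by
    intro x
    have := hf (-x) x
    simp [hf0] at this
    exact eq_neg_of_add_eq_zero_left this.symm
  have hmem : ∀ x x', a x x' ≤ b (f x) (f x') := by
    intro x x'
    rw [hb]
    exact le_sSup ⟨x, x', rfl, rfl, rfl⟩
  refine ⟨?_, ?_, ?_, hmem⟩
  · intro y
    obtain ⟨x, rfl⟩ := hsurj y
    exact le_trans (harefl x) (hmem x x)
  · intro y₁ y₂ y₃
    rw [hb y₁ y₂, hb y₂ y₃, hsup]
    refine iSup₂_le fun v hv => ?_
    obtain ⟨x₂', x₃, h2', h3, rfl⟩ := hv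
    rw [mul_comm, hsup]
    refine iSup₂_le fun w hw => ?_
    obtain ⟨x₁, x₂, h1, h2, rfl⟩ := hw
    rw [mul_comm]
    have hshift : a x₂' x₃ = a x₂ (x₃ + (-x₂' + x₂)) := by
      have := hashift (-x₂' + x₂) x₂' x₃
      rwa [show x₂' + (-x₂' + x₂) = x₂ by simp] at this
    have hf3 : f (x₃ + (-x₂' + x₂)) = y₃ := by
      rw [hf, hf, hfneg, h2, h2', h3]
      simp
    calc a x₁ x₂ * a x₂' x₃ = a x₁ x₂ * a x₂ (x₃ + (-x₂' + x₂)) := by rw [hshift]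
      _ ≤ a x₁ (x₃ + (-x₂' + x₂)) := hatrans _ _ _
      _ ≤ b (f x₁) (f (x₃ + (-x₂' + x₂))) := hmem _ _
      _ = b y₁ y₃ := by rw [h1, hf3]
  · intro y y' y''
    obtain ⟨x₀, rfl⟩ := hsurj y
    have key : ∀ (z : X) (u u' : Y), b u u' ≤ b (u + f z) (u' + f z) := by
      intro z u u'
      rw [hb u u']
      refine sSup_le fun v hv => ?_
      obtain ⟨x₁, x₂, h1, h2, rfl⟩ := hv
      rw [hashift z x₁ x₂]
      have := hmem (x₁ + z) (x₂ + z)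
      rwa [hf, hf, h1, h2] at this
    refine le_antisymm (key x₀ y' y'') ?_
    have := key (-x₀) (y' + f x₀) (y'' + f x₀)
    rwa [hfneg, add_assoc, add_assoc, add_neg_cancel, add_zero, add_zero] at this
end

section
/- Let V be a commutative unital quantale. A V-category (X,a) is symmetric if and only if a is difunctional, i.e. for all x₁,x₂,x₃,x₄: a(x₁,x₂) ⊗ a(x₃,x₂) ⊗ a(x₃,x₄) ≤ a(x₁,x₄). -/
/-- a `V`-category is symmetric iff its structure relation is
difunctional. -/
theorem VCat_symmetric_iff_difunctional {V : Type*} [CompleteLattice V] [CommMonoid V]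
    (hsup : ∀ (u : V) (S : Set V), u * sSup S = ⨆ v ∈ S, u * v)
    {X : Type*} (a : X → X → V)
    (hrefl : ∀ x, (1 : V) ≤ a x x)
    (htrans : ∀ x y z, a x y * a y z ≤ a x z) :
    (∀ x y : X, a x y = a y x) ↔
    (∀ x₁ x₂ x₃ x₄ : X, a x₁ x₂ * a x₃ x₂ * a x₃ x₄ ≤ a x₁ x₄) := by
  have monoR : ∀ u v w : V, v ≤ w → u * v ≤ u * w := by
    intro u v w hvw
    have h := hsup u {v, w}
    have hs : sSup ({v, w} : Set V) = w := by
      simp [sSup_insert, sup_eq_right.mpr hvw]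
    rw [hs] at h
    calc u * v ≤ ⨆ x ∈ ({v, w} : Set V), u * x :=
          le_biSup _ (by simp)
      _ = u * w := h.symm
  have monoL : ∀ u v w : V, v ≤ w → v * u ≤ w * u := by
    intro u v w hvw
    rw [mul_comm v u, mul_comm w u]; exact monoR u v w hvw
  constructor
  · intro hsym x₁ x₂ x₃ x₄
    rw [hsym x₃ x₂]
    calc a x₁ x₂ * a x₂ x₃ * a x₃ x₄
        ≤ a x₁ x₃ * a x₃ x₄ := monoL _ _ _ (htrans _ _ _)
      _ ≤ a x₁ x₄ := htrans _ _ _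
  · intro hd x y
    have key : ∀ x y : X, a x y ≤ a y x := by
      intro x y
      calc a x y = 1 * a x y * 1 := by rw [one_mul, mul_one]
        _ ≤ a y y * a x y * a x x := by
            refine le_trans (monoL _ _ _ (monoL _ _ _ (hrefl y))) ?_
            exact monoR _ _ _ (hrefl x)
        _ ≤ a y x := hd y y x x
    exact le_antisymm (key x y) (key y x)
end

section
/- Let V be a commutative unital quantale, (X,a) and (Y,b) V-groups, and f : (X,a) → (Y,b) a V-homomorphism (group homomorphism that is a V-functor). Then f is open if and only if f is proper, where f is proper means b(f(x),y) = ⋁{a(x,x') : f(x')=y} for all x,y, and f is open means b(y,f(x)) = ⋁{a(x',x) : f(x')=y} for all x,y. -/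
/-- In any shift-invariant `V`-relation on a group, `c p q = c q (q - p + q)`. -/
lemma VGroup_shift_key {V : Type*} {G : Type*} [AddGroup G] (c : G → G → V)
    (h : ∀ t p q : G, c p q = c (p + t) (q + t)) (p q : G) :
    c p q = c q (q - p + q) := by
  have h1 := h (-p) p q
  have h2 := h (-q) q (q - p + q)
  simp [sub_eq_add_neg, add_assoc] at h1 h2
  rw [h1, sub_eq_add_neg, add_assoc, h2]

/-- a `V`-homomorphism between `V`-groups is open iff it is proper. -/
theorem VGroup_hom_open_iff_proper {V : Type*} [CompleteLattice V] [CommMonoid V]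
    (hsup : ∀ (u : V) (S : Set V), u * sSup S = ⨆ v ∈ S, u * v)
    {X Y : Type*} [AddGroup X] [AddGroup Y]
    (a : X → X → V) (b : Y → Y → V)
    (harefl : ∀ x, (1 : V) ≤ a x x)
    (hatrans : ∀ x y z, a x y * a y z ≤ a x z)
    (hashift : ∀ x x' x'' : X, a x' x'' = a (x' + x) (x'' + x))
    (hbrefl : ∀ y, (1 : V) ≤ b y y)
    (hbtrans : ∀ x y z, b x y * b y z ≤ b x z)
    (hbshift : ∀ y y' y'' : Y, b y' y'' = b (y' + y) (y'' + y))
    (f : X → Y) (hf : ∀ x x', f (x + x') = f x + f x')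
    (hfun : ∀ x x', a x x' ≤ b (f x) (f x')) :
    (∀ (x : X) (y : Y), b y (f x) = sSup {v | ∃ x', f x' = y ∧ v = a x' x}) ↔
    (∀ (x : X) (y : Y), b (f x) y = sSup {v | ∃ x', f x' = y ∧ v = a x x'}) := by
  have keya : ∀ p q : X, a p q = a q (q - p + q) := VGroup_shift_key a hashift
  have keyb : ∀ p q : Y, b p q = b q (q - p + q) := VGroup_shift_key b hbshift
  have hf0 : f 0 = 0 := by
    have h := hf 0 0
    simp only [add_zero] at h
    exact left_eq_add.mp h
  have hfneg : ∀ x : X, f (-x) = - f x := by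
    intro x
    have h := hf x (-x)
    simp only [add_neg_cancel, hf0] at h
    exact eq_neg_of_add_eq_zero_right h.symm
  have hfcalc : ∀ x x' : X, f (x - x' + x) = f x - f x' + f x := by
    intro x x'
    simp [hf, hfneg, sub_eq_add_neg]
  have setlem : ∀ (x : X) (y : Y),
      {v | ∃ x', f x' = f x - y + f x ∧ v = a x' x} = {v | ∃ x', f x' = y ∧ v = a x x'} := by
    intro x y
    ext v
    constructor
    · rintro ⟨x', hx', rfl⟩
      refine ⟨x - x' + x, ?_, ?_⟩
      · rw [hfcalc, hx']
        simp [sub_eq_add_neg, neg_add_rev, add_assoc]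
      · exact keya x' x
    · rintro ⟨x', hx', rfl⟩
      refine ⟨x - x' + x, ?_, ?_⟩
      · rw [hfcalc, hx']
      · have h := keya (x - x' + x) x
        have hx : x - (x - x' + x) + x = x' := by
          simp [sub_eq_add_neg, neg_add_rev, add_assoc]
        rw [hx] at h
        exact h.symm
  have hyb : ∀ (x : X) (y : Y), b (f x) y = b (f x - y + f x) (f x) := by
    intro x y
    have h := keyb (f x - y + f x) (f x)
    have hy : f x - (f x - y + f x) + f x = y := by
      simp [sub_eq_add_neg, neg_add_rev, add_assoc]
    rw [hy] at h
    exact h.symm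
  constructor
  · intro H x y
    rw [hyb x y, H x (f x - y + f x), setlem x y]
  · intro H x y
    rw [keyb y (f x), H x (f x - y + f x)]
    have h := setlem x (f x - y + f x)
    have hy : f x - (f x - y + f x) + f x = y := by
      simp [sub_eq_add_neg, neg_add_rev, add_assoc]
    rw [hy] at h
    rw [← h]
end

section
/- Let V be a commutative unital quantale with k = ⊤, and let f : (X,a) → (Y,b) be a surjective V-homomorphism of V-groups such that b(y₁,y₂) = ⋁{a(x₁,x₂) : f(x₁)=y₁, f(x₂)=y₂} (a regular epimorphism in VGrp). Then f is open: b(y,f(x)) = ⋁{a(z,x) : f(z)=y} for all y ∈ Y, x ∈ X. -/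
/-! Translating a pair `(x₁, x₂)` over `(y, f x)` on the right by `-x₂ + x` gives the pair
`(x₁ - x₂ + x, x)`, which has the same `a`-value by shift invariance and still lies over
`(y, f x)` because `f` is a homomorphism. So in the supremum describing `b y (f x)` for a
regular epimorphism, the second coordinate can be fixed to be `x`. -/

lemma apply_eq_apply_add_neg_add {V X : Type*} [AddGroup X] {a : X → X → V}
    (hashift : ∀ x x' x'' : X, a x' x'' = a (x' + x) (x'' + x)) (x₁ x₂ x : X) :
    a x₁ x₂ = a (x₁ + (-x₂ + x)) x := by
  rw [hashift (-x₂ + x) x₁ x₂, add_neg_cancel_left]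

lemma sSup_fiber_le {V X Y : Type*} [CompleteLattice V]
    {a : X → X → V} {b : Y → Y → V} {f : X → Y}
    (hfun : ∀ x x', a x x' ≤ b (f x) (f x')) (y : Y) (x : X) :
    sSup {v | ∃ z, f z = y ∧ v = a z x} ≤ b y (f x) := by
  refine sSup_le ?_
  rintro - ⟨z, rfl, rfl⟩
  exact hfun z x

lemma le_sSup_fiber_of_eq_sSup {V X Y : Type*} [CompleteLattice V] [AddGroup X] [AddGroup Y]
    {a : X → X → V} {b : Y → Y → V} (f : X →+ Y)
    (hashift : ∀ x x' x'' : X, a x' x'' = a (x' + x) (x'' + x))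
    (hfinal : ∀ y₁ y₂, b y₁ y₂ = sSup {v | ∃ x₁ x₂, f x₁ = y₁ ∧ f x₂ = y₂ ∧ v = a x₁ x₂})
    (y : Y) (x : X) :
    b y (f x) ≤ sSup {v | ∃ z, f z = y ∧ v = a z x} := by
  rw [hfinal]
  refine sSup_le ?_
  rintro - ⟨x₁, x₂, rfl, hx₂, rfl⟩
  refine le_sSup ⟨x₁ + (-x₂ + x), ?_, apply_eq_apply_add_neg_add hashift x₁ x₂ x⟩
  simp [hx₂]

theorem VGroup_regular_epi_open_general {V : Type*} [CompleteLattice V]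
    {X Y : Type*} [AddGroup X] [AddGroup Y]
    (a : X → X → V) (b : Y → Y → V)
    (hashift : ∀ x x' x'' : X, a x' x'' = a (x' + x) (x'' + x))
    (f : X → Y) (hf : ∀ x x', f (x + x') = f x + f x')
    (hfun : ∀ x x', a x x' ≤ b (f x) (f x'))
    (hfinal : ∀ y₁ y₂, b y₁ y₂ = sSup {v | ∃ x₁ x₂, f x₁ = y₁ ∧ f x₂ = y₂ ∧ v = a x₁ x₂}) :
    ∀ (y : Y) (x : X), b y (f x) = sSup {v | ∃ z, f z = y ∧ v = a z x} := fun y x =>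
  le_antisymm (le_sSup_fiber_of_eq_sSup (AddMonoidHom.mk' f hf) hashift hfinal y x)
    (sSup_fiber_le hfun y x)

/-- when `k = ⊤`, every regular epimorphism of `V`-groups is open. -/
theorem VGroup_regular_epi_open {V : Type*} [CompleteLattice V] [CommMonoid V]
    (hsup : ∀ (u : V) (S : Set V), u * sSup S = ⨆ v ∈ S, u * v)
    (hk : (1 : V) = ⊤)
    {X Y : Type*} [AddGroup X] [AddGroup Y]
    (a : X → X → V) (b : Y → Y → V)
    (harefl : ∀ x, (1 : V) ≤ a x x)
    (hatrans : ∀ x y z, a x y * a y z ≤ a x z)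
    (hashift : ∀ x x' x'' : X, a x' x'' = a (x' + x) (x'' + x))
    (hbrefl : ∀ y, (1 : V) ≤ b y y)
    (hbtrans : ∀ x y z, b x y * b y z ≤ b x z)
    (hbshift : ∀ y y' y'' : Y, b y' y'' = b (y' + y) (y'' + y))
    (f : X → Y) (hf : ∀ x x', f (x + x') = f x + f x')
    (hfun : ∀ x x', a x x' ≤ b (f x) (f x'))
    (hsurj : Function.Surjective f)
    (hfinal : ∀ y₁ y₂, b y₁ y₂ = sSup {v | ∃ x₁ x₂, f x₁ = y₁ ∧ f x₂ = y₂ ∧ v = a x₁ x₂}) :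
    ∀ (y : Y) (x : X), b y (f x) = sSup {v | ∃ z, f z = y ∧ v = a z x} :=
  VGroup_regular_epi_open_general a b hashift f hf hfun hfinal
end

section
/- Let V be a commutative unital quantale with k = ⊤ that is not a frame, i.e. there exist u,v ∈ V with u ⊗ v < u ∧ v. Then there exist V-group structures a and b on the group ℤ/2ℤ such that the identity map (ℤ/2ℤ × ℤ/2ℤ, a ⊗ b) → (ℤ/2ℤ × ℤ/2ℤ, a ∧ b) is a V-functor but not an isomorphism of V-categories. Concretely, setting a(0,1)=a(1,0)=u, a(0,0)=a(1,1)=⊤ and b(0,1)=b(1,0)=v, b(0,0)=b(1,1)=⊤ gives such structures, with (a⊗b)((0,0),(1,1)) = u⊗v < u∧v = (a∧b)((0,0),(1,1)). -/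
/-- if the quantale (with `k = ⊤`) is not a frame, there are `V`-group
structures `a`, `b` on `ℤ/2ℤ` whose tensor structure on the product is a `V`-functor
into the product structure via the identity, but not an isomorphism. -/
theorem not_frame_tensor_ne_product {V : Type*} [CompleteLattice V] [CommMonoid V]
    (hsup : ∀ (u : V) (S : Set V), u * sSup S = ⨆ v ∈ S, u * v)
    (hk : (1 : V) = ⊤)
    {u v : V} (huv : u * v < u ⊓ v) :
    ∃ a b : ZMod 2 → ZMod 2 → V,
      -- a is a V-group structure on ℤ/2ℤ
      (∀ x, (1 : V) ≤ a x x) ∧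
      (∀ x y z, a x y * a y z ≤ a x z) ∧
      (∀ x x' x'' : ZMod 2, a x' x'' = a (x' + x) (x'' + x)) ∧
      -- b is a V-group structure on ℤ/2ℤ
      (∀ x, (1 : V) ≤ b x x) ∧
      (∀ x y z, b x y * b y z ≤ b x z) ∧
      (∀ x x' x'' : ZMod 2, b x' x'' = b (x' + x) (x'' + x)) ∧
      -- the concrete values
      a 0 1 = u ∧ a 1 0 = u ∧ a 0 0 = ⊤ ∧ a 1 1 = ⊤ ∧
      b 0 1 = v ∧ b 1 0 = v ∧ b 0 0 = ⊤ ∧ b 1 1 = ⊤ ∧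
      -- the identity is a V-functor from the tensor to the product structure
      (∀ p q : ZMod 2 × ZMod 2, a p.1 q.1 * b p.2 q.2 ≤ a p.1 q.1 ⊓ b p.2 q.2) ∧
      -- but not an isomorphism of V-categories
      a 0 1 * b 0 1 < a 0 1 ⊓ b 0 1 := by
  -- multiplication is monotone in the right argument
  have mono : ∀ (x : V) {y z : V}, y ≤ z → x * y ≤ x * z := by
    intro x y z hyz
    have h : x * sSup {y, z} = ⨆ w ∈ ({y, z} : Set V), x * w := hsup x {y, z}
    have hs : sSup ({y, z} : Set V) = z := by
      rw [sSup_pair, sup_eq_right.mpr hyz]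
    rw [hs] at h
    rw [h]
    exact le_biSup _ (Set.mem_insert y {z})
  have mul_le_left : ∀ x y : V, x * y ≤ x := by
    intro x y
    calc x * y ≤ x * ⊤ := mono x le_top
    _ = x * 1 := by rw [hk]
    _ = x := mul_one x
  have mul_le_right : ∀ x y : V, x * y ≤ y := by
    intro x y; rw [mul_comm]; exact mul_le_left y x
  -- generic structure
  have key : ∀ w : V, (∀ x : ZMod 2, (1:V) ≤ (fun x y => if x = y then ⊤ else w) x x) ∧
      (∀ x y z : ZMod 2, (if x = y then ⊤ else w) * (if y = z then ⊤ else w) ≤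
        (if x = z then ⊤ else w)) ∧
      (∀ x x' x'' : ZMod 2, (if x' = x'' then ⊤ else w) =
        (if x' + x = x'' + x then ⊤ else w)) := by
    intro w
    refine ⟨fun x => by simp, ?_, fun x x' x'' => by simp⟩
    intro x y z
    by_cases hxz : x = z
    · simp [hxz]
    · rw [if_neg hxz]
      by_cases hxy : x = y
      · have hyz : y ≠ z := by rw [← hxy]; exact hxz
        rw [if_pos hxy, if_neg hyz, ← hk, one_mul]
      · rw [if_neg hxy]
        exact mul_le_left _ _
  obtain ⟨ha1, ha2, ha3⟩ := key u
  obtain ⟨hb1, hb2, hb3⟩ := key v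
  refine ⟨fun x y => if x = y then ⊤ else u, fun x y => if x = y then ⊤ else v,
    ha1, ha2, ha3, hb1, hb2, hb3, ?_, ?_, ?_, ?_, ?_, ?_, ?_, ?_, ?_, ?_⟩
  · norm_num
  · norm_num
  · norm_num
  · norm_num
  · norm_num
  · norm_num
  · norm_num
  · norm_num
  · intro p q
    exact le_inf (mul_le_left _ _) (mul_le_right _ _)
  · norm_num
    exact huv
end

section
/- Let V be a commutative unital quantale with k = ⊤, let X, Y be groups, φ : Y → Aut(X) a group action, and let (X,a), (Y,b) be V-groups. Consider the semidirect product X ⋊_φ Y with (x,y)+(x',y') = (x + φ_y(x'), y+y'). Then (X ⋊_φ Y, a⊗b) is a V-group (with (a⊗b)((x₁,y₁),(x₂,y₂)) = a(x₁,x₂) ⊗ b(y₁,y₂)) if and only if the map (x,y) ↦ (φ_y(x), y) is a V-functor on (X×Y, a⊗b), i.e. a(x₁,x₂) ⊗ b(y₁,y₂) ≤ a(φ_{y₁}(x₁), φ_{y₂}(x₂)) ⊗ b(y₁,y₂) for all x₁,x₂,y₁,y₂. -/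
/-- the tensor structure makes the semidirect product a `V`-group iff the
map `(x,y) ↦ (φ_y(x), y)` is a `V`-functor on the tensor structure. -/
theorem semidirect_tensor_VGroup_iff {V : Type*} [CompleteLattice V] [CommMonoid V]
    (hsup : ∀ (u : V) (S : Set V), u * sSup S = ⨆ v ∈ S, u * v)
    (hk : (1 : V) = ⊤)
    {X Y : Type*} [AddGroup X] [AddGroup Y]
    (φ : Y → X ≃+ X)
    (hφ0 : φ 0 = AddEquiv.refl X)
    (hφadd : ∀ y y' x, φ (y + y') x = φ y (φ y' x))
    (a : X → X → V) (b : Y → Y → V)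
    (harefl : ∀ x, (1 : V) ≤ a x x)
    (hatrans : ∀ x y z, a x y * a y z ≤ a x z)
    (haadd : ∀ x₁ x₂ x₁' x₂' : X, a x₁ x₂ * a x₁' x₂' ≤ a (x₁ + x₁') (x₂ + x₂'))
    (hbrefl : ∀ y, (1 : V) ≤ b y y)
    (hbtrans : ∀ x y z, b x y * b y z ≤ b x z)
    (hbadd : ∀ y₁ y₂ y₁' y₂' : Y, b y₁ y₂ * b y₁' y₂' ≤ b (y₁ + y₁') (y₂ + y₂')) :
    -- (i): the tensor structure a⊗b is compatible with the semidirect product addition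
    (∀ p₁ p₂ q₁ q₂ : X × Y,
        (a p₁.1 p₂.1 * b p₁.2 p₂.2) * (a q₁.1 q₂.1 * b q₁.2 q₂.2) ≤
          a (p₁.1 + φ p₁.2 q₁.1) (p₂.1 + φ p₂.2 q₂.1) * b (p₁.2 + q₁.2) (p₂.2 + q₂.2)) ↔
    -- (ii): (x,y) ↦ (φ_y(x), y) is a V-functor on (X × Y, a ⊗ b)
    (∀ (x₁ x₂ : X) (y₁ y₂ : Y),
        a x₁ x₂ * b y₁ y₂ ≤ a (φ y₁ x₁) (φ y₂ x₂) * b y₁ y₂) := by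
  have hmono : ∀ (u : V) {v w : V}, v ≤ w → u * v ≤ u * w := by
    intro u v w h
    have h1 := hsup u {v, w}
    have h2 : sSup {v, w} = w := by
      rw [sSup_pair, sup_eq_right.mpr h]
    rw [h2] at h1
    rw [h1]
    exact le_biSup (fun x => u * x) (Set.mem_insert v {w})
  have hmul : ∀ {v w v' w' : V}, v ≤ w → v' ≤ w' → v * v' ≤ w * w' := by
    intro v w v' w' h h'
    calc v * v' ≤ v * w' := hmono v h'
    _ = w' * v := mul_comm _ _
    _ ≤ w' * w := hmono w' h
    _ = w * w' := mul_comm _ _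
  constructor
  · intro H x₁ x₂ y₁ y₂
    have := H (0, y₁) (0, y₂) (x₁, 0) (x₂, 0)
    simp only [zero_add, add_zero] at this
    refine le_trans ?_ this
    calc a x₁ x₂ * b y₁ y₂ = (1 * b y₁ y₂) * (a x₁ x₂ * 1) := by
          rw [one_mul, mul_one]; exact mul_comm _ _
    _ ≤ (a 0 0 * b y₁ y₂) * (a x₁ x₂ * b 0 0) :=
        hmul (hmul (harefl 0) le_rfl) (hmul le_rfl (hbrefl 0))
  · intro H p₁ p₂ q₁ q₂
    calc (a p₁.1 p₂.1 * b p₁.2 p₂.2) * (a q₁.1 q₂.1 * b q₁.2 q₂.2)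
        = (a p₁.1 p₂.1 * (a q₁.1 q₂.1 * b p₁.2 p₂.2)) * b q₁.2 q₂.2 := by ac_rfl
    _ ≤ (a p₁.1 p₂.1 * (a (φ p₁.2 q₁.1) (φ p₂.2 q₂.1) * b p₁.2 p₂.2)) * b q₁.2 q₂.2 :=
        hmul (hmono _ (H _ _ _ _)) le_rfl
    _ = (a p₁.1 p₂.1 * a (φ p₁.2 q₁.1) (φ p₂.2 q₂.1)) * (b p₁.2 p₂.2 * b q₁.2 q₂.2) := by ac_rfl
    _ ≤ _ := hmul (haadd _ _ _ _) (hbadd _ _ _ _)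
end

section
/- Let V be a commutative unital quantale with k = ⊤. Let (X,a), (Y,b) be V-groups, φ : Y → Aut(X) a group action such that each φ_y : (X,a) → (X,a) is a V-functor. Define the lexicographic structure on X ⋊_φ Y by lex((x,y),(x',y')) = a(x,x') if y = y', and b(y,y') if y ≠ y'. Then (X ⋊_φ Y, lex, +) is a V-group if and only if for all x ∈ X and all y ∈ Y with y ≠ 0, b(y,0) ⊗ b(0,y) ≤ a(x,0). -/
/-- the lexicographic structure makes the semidirect product a `V`-group
iff `b(y,0) ⊗ b(0,y) ≤ a(x,0)` for all `x` and all `y ≠ 0`. -/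
theorem semidirect_lex_VGroup_iff {V : Type*} [CompleteLattice V] [CommMonoid V]
    (hsup : ∀ (u : V) (S : Set V), u * sSup S = ⨆ v ∈ S, u * v)
    (hk : (1 : V) = ⊤)
    {X Y : Type*} [AddGroup X] [AddGroup Y] [DecidableEq Y]
    (φ : Y → X ≃+ X)
    (hφ0 : φ 0 = AddEquiv.refl X)
    (hφadd : ∀ y y' x, φ (y + y') x = φ y (φ y' x))
    (a : X → X → V) (b : Y → Y → V)
    (harefl : ∀ x, (1 : V) ≤ a x x)
    (hatrans : ∀ x y z, a x y * a y z ≤ a x z)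
    (haadd : ∀ x₁ x₂ x₁' x₂' : X, a x₁ x₂ * a x₁' x₂' ≤ a (x₁ + x₁') (x₂ + x₂'))
    (hbrefl : ∀ y, (1 : V) ≤ b y y)
    (hbtrans : ∀ x y z, b x y * b y z ≤ b x z)
    (hbadd : ∀ y₁ y₂ y₁' y₂' : Y, b y₁ y₂ * b y₁' y₂' ≤ b (y₁ + y₁') (y₂ + y₂'))
    (hφfun : ∀ (y : Y) (x x' : X), a x x' ≤ a (φ y x) (φ y x'))
    -- the lexicographic structure on X ⋊ Y
    (lex : X × Y → X × Y → V)
    (hlex : ∀ p q : X × Y, lex p q = if p.2 = q.2 then a p.1 q.1 else b p.2 q.2) :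
    -- (X ⋊ Y, lex, +) is a V-group iff …
    ((∀ p : X × Y, (1 : V) ≤ lex p p) ∧
     (∀ p q r : X × Y, lex p q * lex q r ≤ lex p r) ∧
     (∀ p₁ p₂ q₁ q₂ : X × Y,
        lex p₁ p₂ * lex q₁ q₂ ≤
          lex (p₁.1 + φ p₁.2 q₁.1, p₁.2 + q₁.2) (p₂.1 + φ p₂.2 q₂.1, p₂.2 + q₂.2))) ↔
    (∀ (x : X) (y : Y), y ≠ 0 → b y 0 * b 0 y ≤ a x 0) := by
  have le_one : ∀ v : V, v ≤ 1 := fun v => hk ▸ le_top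
  have mono : ∀ {u v : V} (w : V), u ≤ v → w * u ≤ w * v := by
    intro u v w h
    have h1 := hsup w {u, v}
    rw [sSup_pair, sup_eq_right.mpr h] at h1
    rw [h1, iSup_pair]
    exact le_sup_left
  have mono' : ∀ {u v : V} (w : V), u ≤ v → u * w ≤ v * w := by
    intro u v w h
    rw [mul_comm u w, mul_comm v w]; exact mono w h
  have mulmul : ∀ {u u' v v' : V}, u ≤ u' → v ≤ v' → u * v ≤ u' * v' := by
    intro u u' v v' h1 h2
    exact le_trans (mono u h2) (mono' v' h1)
  constructor
  · rintro ⟨-, -, hadd⟩ x y hy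
    have h := hadd (x, y) (0, 0) (0, 0) (0, y)
    simp only [hlex] at h
    simpa [hy, Ne.symm hy, (φ y).map_zero, (φ 0).map_zero] using h
  · intro C
    have key : ∀ (u v : Y), u ≠ v → ∀ x x' : X, b u v * b v u ≤ a x x' := by
      intro u v huv x x'
      have h1 : b u v ≤ b (u - v) 0 := by
        calc b u v = b u v * 1 := (mul_one _).symm
          _ ≤ b u v * b (-v) (-v) := mono _ (hbrefl _)
          _ ≤ b (u + -v) (v + -v) := hbadd _ _ _ _
          _ = b (u - v) 0 := by rw [← sub_eq_add_neg, add_neg_cancel]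
      have h2 : b v u ≤ b 0 (u - v) := by
        calc b v u = b v u * 1 := (mul_one _).symm
          _ ≤ b v u * b (-v) (-v) := mono _ (hbrefl _)
          _ ≤ b (v + -v) (u + -v) := hbadd _ _ _ _
          _ = b 0 (u - v) := by rw [add_neg_cancel, ← sub_eq_add_neg]
      calc b u v * b v u ≤ b (u - v) 0 * b 0 (u - v) := mulmul h1 h2
        _ ≤ a (x - x') 0 := C _ _ (sub_ne_zero.mpr huv)
        _ = a (x - x') 0 * 1 := (mul_one _).symm
        _ ≤ a (x - x') 0 * a x' x' := mono _ (harefl _)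
        _ ≤ a (x - x' + x') (0 + x') := haadd _ _ _ _
        _ = a x x' := by rw [sub_add_cancel, zero_add]
    refine ⟨?_, ?_, ?_⟩
    · intro p; rw [hlex]; simpa using harefl p.1
    · intro p q r
      rw [hlex, hlex, hlex]
      by_cases h1 : p.2 = q.2 <;> by_cases h2 : q.2 = r.2
      · rw [if_pos h1, if_pos h2, if_pos (h1.trans h2)]
        exact hatrans _ _ _
      · rw [if_pos h1, if_neg h2, if_neg (fun h => h2 (h1.symm.trans h)), h1]
        calc a p.1 q.1 * b q.2 r.2 ≤ 1 * b q.2 r.2 := mono' _ (le_one _)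
          _ = b q.2 r.2 := one_mul _
      · rw [if_neg h1, if_pos h2, if_neg (fun h => h1 (h.trans h2.symm)), ← h2]
        calc b p.2 q.2 * a q.1 r.1 ≤ b p.2 q.2 * 1 := mono _ (le_one _)
          _ = b p.2 q.2 := mul_one _
      · rw [if_neg h1, if_neg h2]
        by_cases h3 : p.2 = r.2
        · rw [if_pos h3, ← h3]
          exact key _ _ h1 _ _
        · rw [if_neg h3]
          exact hbtrans _ _ _
    · intro p₁ p₂ q₁ q₂
      rw [hlex, hlex, hlex]
      dsimp only
      by_cases h1 : p₁.2 = p₂.2 <;> by_cases h2 : q₁.2 = q₂.2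
      · rw [if_pos h1, if_pos h2, if_pos (by rw [h1, h2]), h1]
        calc a p₁.1 p₂.1 * a q₁.1 q₂.1
            ≤ a p₁.1 p₂.1 * a (φ p₂.2 q₁.1) (φ p₂.2 q₂.1) := mono _ (hφfun _ _ _)
          _ ≤ a (p₁.1 + φ p₂.2 q₁.1) (p₂.1 + φ p₂.2 q₂.1) := haadd _ _ _ _
      · rw [if_pos h1, if_neg h2,
          if_neg (by rw [h1]; exact fun h => h2 (add_left_cancel h)), h1]
        calc a p₁.1 p₂.1 * b q₁.2 q₂.2 ≤ 1 * b q₁.2 q₂.2 := mono' _ (le_one _)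
          _ ≤ b p₂.2 p₂.2 * b q₁.2 q₂.2 := mono' _ (hbrefl _)
          _ ≤ b (p₂.2 + q₁.2) (p₂.2 + q₂.2) := hbadd _ _ _ _
      · rw [if_neg h1, if_pos h2,
          if_neg (by rw [h2]; exact fun h => h1 (add_right_cancel h)), ← h2]
        calc b p₁.2 p₂.2 * a q₁.1 q₂.1 ≤ b p₁.2 p₂.2 * 1 := mono _ (le_one _)
          _ ≤ b p₁.2 p₂.2 * b q₁.2 q₁.2 := mono _ (hbrefl _)
          _ ≤ b (p₁.2 + q₁.2) (p₂.2 + q₁.2) := hbadd _ _ _ _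
      · rw [if_neg h1, if_neg h2]
        have hst1 : b p₁.2 p₂.2 ≤ b (p₁.2 + q₁.2) (p₂.2 + q₁.2) := by
          calc b p₁.2 p₂.2 = b p₁.2 p₂.2 * 1 := (mul_one _).symm
            _ ≤ b p₁.2 p₂.2 * b q₁.2 q₁.2 := mono _ (hbrefl _)
            _ ≤ b (p₁.2 + q₁.2) (p₂.2 + q₁.2) := hbadd _ _ _ _
        have hst2 : b q₁.2 q₂.2 ≤ b (p₂.2 + q₁.2) (p₂.2 + q₂.2) := by
          calc b q₁.2 q₂.2 = 1 * b q₁.2 q₂.2 := (one_mul _).symm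
            _ ≤ b p₂.2 p₂.2 * b q₁.2 q₂.2 := mono' _ (hbrefl _)
            _ ≤ b (p₂.2 + q₁.2) (p₂.2 + q₂.2) := hbadd _ _ _ _
        by_cases h3 : p₁.2 + q₁.2 = p₂.2 + q₂.2
        · rw [if_pos h3]
          have hne : p₁.2 + q₁.2 ≠ p₂.2 + q₁.2 := fun h => h1 (add_right_cancel h)
          calc b p₁.2 p₂.2 * b q₁.2 q₂.2
              ≤ b (p₁.2 + q₁.2) (p₂.2 + q₁.2) * b (p₂.2 + q₁.2) (p₂.2 + q₂.2) :=
                mulmul hst1 hst2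
            _ = b (p₁.2 + q₁.2) (p₂.2 + q₁.2) * b (p₂.2 + q₁.2) (p₁.2 + q₁.2) := by
                rw [h3]
            _ ≤ a _ _ := key _ _ hne _ _
        · rw [if_neg h3]
          exact hbadd _ _ _ _
end

section
/- Let V be a commutative unital quantale with k = ⊤, and suppose c is a V-group structure on the semidirect product X ⋊_φ Y such that the inclusion x ↦ (x,0) is a V-functor from (X,a) with a(x,x') = c((x,0),(x',0)) (kernel with initial structure), the inclusion y ↦ (0,y) and projection (x,y) ↦ y are V-functors with respect to a V-group structure b on Y. Then a(0,x) ⊗ b(0,y) ≤ c((0,0),(x,y)) ≤ lex((0,0),(x,y)) for all x,y, where lex((0,0),(x,y)) = a(0,x) if y = 0 and b(0,y) otherwise. -/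
/-- any compatible `V`-group structure on a semidirect product lies between
the tensor structure and the lexicographic structure. -/
theorem semidirect_structure_between_tensor_and_lex {V : Type*} [CompleteLattice V]
    [CommMonoid V]
    (hsup : ∀ (u : V) (S : Set V), u * sSup S = ⨆ v ∈ S, u * v)
    (hk : (1 : V) = ⊤)
    {X Y : Type*} [AddGroup X] [AddGroup Y] [DecidableEq Y]
    (φ : Y → X ≃+ X)
    (hφ0 : φ 0 = AddEquiv.refl X)
    (hφadd : ∀ y y' x, φ (y + y') x = φ y (φ y' x))
    (a : X → X → V) (b : Y → Y → V) (c : X × Y → X × Y → V)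
    -- c is a V-group structure on the semidirect product X ⋊ Y
    (hcrefl : ∀ p : X × Y, (1 : V) ≤ c p p)
    (hctrans : ∀ p q r : X × Y, c p q * c q r ≤ c p r)
    (hcadd : ∀ p₁ p₂ q₁ q₂ : X × Y,
        c p₁ p₂ * c q₁ q₂ ≤
          c (p₁.1 + φ p₁.2 q₁.1, p₁.2 + q₁.2) (p₂.1 + φ p₂.2 q₂.1, p₂.2 + q₂.2))
    -- b is a V-group structure on Y
    (hbrefl : ∀ y, (1 : V) ≤ b y y)
    (hbtrans : ∀ x y z, b x y * b y z ≤ b x z)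
    (hbadd : ∀ y₁ y₂ y₁' y₂' : Y, b y₁ y₂ * b y₁' y₂' ≤ b (y₁ + y₁') (y₂ + y₂'))
    -- the kernel x ↦ (x,0) carries the initial structure
    (hker : ∀ x x' : X, a x x' = c (x, 0) (x', 0))
    -- the section y ↦ (0,y) is a V-functor
    (hsec : ∀ y y' : Y, b y y' ≤ c (0, y) (0, y'))
    -- the projection (x,y) ↦ y is a V-functor
    (hproj : ∀ p q : X × Y, c p q ≤ b p.2 q.2) :
    ∀ (x : X) (y : Y),
      a 0 x * b 0 y ≤ c (0, 0) (x, y) ∧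
      c (0, 0) (x, y) ≤ (if y = 0 then a 0 x else b 0 y) := by
  have hmul : ∀ s s' t t' : V, s ≤ s' → t ≤ t' → s * t ≤ s' * t' := by
    have key : ∀ u v w : V, v ≤ w → u * v ≤ u * w := by
      intro u v w hvw
      have : u * sSup {v, w} = ⨆ t ∈ ({v, w} : Set V), u * t := hsup u {v, w}
      rw [sSup_pair, sup_eq_right.mpr hvw] at this
      rw [this]
      exact le_biSup _ (Set.mem_insert v {w})
    intro s s' t t' hs ht
    calc s * t ≤ s * t' := key s t t' ht
      _ = t' * s := mul_comm _ _
      _ ≤ t' * s' := key t' s s' hs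
      _ = s' * t' := mul_comm _ _
  intro x y
  constructor
  · have h := hcadd (0, 0) (x, 0) (0, 0) (0, y)
    simp only [map_zero, add_zero, zero_add] at h
    calc a 0 x * b 0 y ≤ c (0, 0) (x, 0) * c (0, 0) (0, y) := by
          rw [hker]; exact hmul _ _ _ _ le_rfl (hsec 0 y)
      _ ≤ c (0, 0) (x, y) := h
  · by_cases hy : y = 0
    · subst hy; simp only [if_pos rfl]; exact le_of_eq (hker 0 x).symm
    · simpa [hy] using hproj (0, 0) (x, y)
end

section
/- Let V be a frame (⊗ = ∧, k = ⊤). Let c be a V-group structure on the semidirect product X ⋊_φ Y such that: the projection π₂ : (X⋊Y,c) → (Y,b) is a V-functor, the inclusion y ↦ (0,y) is a V-functor from (Y,b), and c((x,0),(x',0)) = a(x,x'), where (Y,b) is a symmetric V-group. Then c((0,0),(x,y)) = a(0,x) ∧ b(0,y) for all x ∈ X, y ∈ Y; i.e. c is the product structure. -/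
/-- over a frame, when `(Y,b)` is a symmetric `V`-group, the only compatible
`V`-group structure on a semidirect product `X ⋊ Y` is the product structure. -/
theorem semidirect_symmetric_is_product {V : Type*} [Order.Frame V]
    {X Y : Type*} [AddGroup X] [AddGroup Y]
    (φ : Y → X ≃+ X)
    (hφ0 : φ 0 = AddEquiv.refl X)
    (hφadd : ∀ y y' x, φ (y + y') x = φ y (φ y' x))
    (a : X → X → V) (b : Y → Y → V) (c : X × Y → X × Y → V)
    -- c is a V-group structure on the semidirect product X ⋊ Y (tensor = ⊓, unit = ⊤)
    (hcrefl : ∀ p : X × Y, (⊤ : V) ≤ c p p)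
    (hctrans : ∀ p q r : X × Y, c p q ⊓ c q r ≤ c p r)
    (hcadd : ∀ p₁ p₂ q₁ q₂ : X × Y,
        c p₁ p₂ ⊓ c q₁ q₂ ≤
          c (p₁.1 + φ p₁.2 q₁.1, p₁.2 + q₁.2) (p₂.1 + φ p₂.2 q₂.1, p₂.2 + q₂.2))
    -- (Y,b) is a symmetric V-group
    (hbrefl : ∀ y, (⊤ : V) ≤ b y y)
    (hbtrans : ∀ x y z, b x y ⊓ b y z ≤ b x z)
    (hbadd : ∀ y₁ y₂ y₁' y₂' : Y, b y₁ y₂ ⊓ b y₁' y₂' ≤ b (y₁ + y₁') (y₂ + y₂'))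
    (hbsym : ∀ y y' : Y, b y y' = b y' y)
    -- the restriction of c to X is a
    (hker : ∀ x x' : X, c (x, 0) (x', 0) = a x x')
    -- the section y ↦ (0,y) is a V-functor
    (hsec : ∀ y y' : Y, b y y' ≤ c (0, y) (0, y'))
    -- the projection (x,y) ↦ y is a V-functor
    (hproj : ∀ p q : X × Y, c p q ≤ b p.2 q.2) :
    ∀ (x : X) (y : Y), c (0, 0) (x, y) = a 0 x ⊓ b 0 y := by
  intro x y
  have key := hcadd (0,0) (x,y) (0,0) (0,-y)
  simp only [hφ0, AddEquiv.coe_refl, id_eq, map_zero, add_zero, zero_add,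
    add_neg_cancel] at key
  -- key : c (0,0) (x,y) ⊓ c (0,0) (0,-y) ≤ c (0,0) (x,0)
  have h1 : b 0 y ≤ b 0 (-y) := by
    have := hbadd y 0 (-y) (-y)
    calc b 0 y = b y 0 ⊓ ⊤ := by rw [hbsym, inf_top_eq]
    _ ≤ b y 0 ⊓ b (-y) (-y) := inf_le_inf_left _ (hbrefl _)
    _ ≤ b (y + -y) (0 + -y) := hbadd _ _ _ _
    _ = b 0 (-y) := by rw [add_neg_cancel, zero_add]
  have hle_a : c (0,0) (x,y) ≤ a 0 x := by
    rw [← hker]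
    refine le_trans ?_ key
    refine le_inf le_rfl ?_
    exact (hproj _ _).trans (h1.trans (hsec 0 (-y)))
  have hle_b : c (0,0) (x,y) ≤ b 0 y := hproj _ _
  have hge : a 0 x ⊓ b 0 y ≤ c (0,0) (x,y) := by
    have := hcadd (0,0) (x,0) (0,0) (0,y)
    simp only [hφ0, AddEquiv.coe_refl, id_eq, map_zero, add_zero, zero_add] at this
    calc a 0 x ⊓ b 0 y = c (0,0) (x,0) ⊓ b 0 y := by rw [hker]
    _ ≤ c (0,0) (x,0) ⊓ c (0,0) (0,y) := inf_le_inf_left _ (hsec _ _)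
    _ ≤ _ := this
  exact le_antisymm (le_inf hle_a hle_b) hge
end

section
/- Let V be a commutative unital quantale in which arbitrary joins distribute over finite meets (V is a frame as a lattice). If f : (X,a) → (Y,b) and g : (Z,c) → (Y,b) are V-functors between V-categories, f is surjective and final (b(y₁,y₂) = ⋁{a(x₁,x₂) : f(xᵢ)=yᵢ}), and the pullback X ×_Y Z carries the structure (a∧c)((x,z),(x',z')) = a(x,x') ∧ c(z,z'), then the projection π₂ : X ×_Y Z → Z is surjective and final: c(z₁,z₂) = ⋁{ a(x₁,x₂) ∧ c(z₁,z₂) : f(xᵢ) = g(zᵢ) } for all z₁,z₂ ∈ Z. -/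
/-- pullback stability of surjective final `V`-functors, when arbitrary
joins distribute over finite meets in `V`. -/
theorem pullback_of_final_is_final {V : Type*} [CompleteLattice V] [CommMonoid V]
    (hsup : ∀ (u : V) (S : Set V), u * sSup S = ⨆ v ∈ S, u * v)
    (hframe : ∀ (u : V) (S : Set V), u ⊓ sSup S = ⨆ v ∈ S, u ⊓ v)
    {X Y Z : Type*} (a : X → X → V) (b : Y → Y → V) (c : Z → Z → V)
    (harefl : ∀ x, (1 : V) ≤ a x x)
    (hatrans : ∀ x y z, a x y * a y z ≤ a x z)
    (hbrefl : ∀ y, (1 : V) ≤ b y y)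
    (hbtrans : ∀ x y z, b x y * b y z ≤ b x z)
    (hcrefl : ∀ z, (1 : V) ≤ c z z)
    (hctrans : ∀ x y z, c x y * c y z ≤ c x z)
    (f : X → Y) (g : Z → Y)
    (hffun : ∀ x x', a x x' ≤ b (f x) (f x'))
    (hgfun : ∀ z z', c z z' ≤ b (g z) (g z'))
    (hfsurj : Function.Surjective f)
    (hffinal : ∀ y₁ y₂, b y₁ y₂ = sSup {v | ∃ x₁ x₂, f x₁ = y₁ ∧ f x₂ = y₂ ∧ v = a x₁ x₂}) :
    -- π₂ : X ×_Y Z → Z is surjective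
    (∀ z : Z, ∃ p : {p : X × Z // f p.1 = g p.2}, p.1.2 = z) ∧
    -- and final
    (∀ z₁ z₂ : Z,
      c z₁ z₂ = sSup {v | ∃ x₁ x₂, f x₁ = g z₁ ∧ f x₂ = g z₂ ∧ v = a x₁ x₂ ⊓ c z₁ z₂}) := by
  constructor
  · intro z
    obtain ⟨x, hx⟩ := hfsurj (g z)
    exact ⟨⟨(x, z), hx⟩, rfl⟩
  · intro z₁ z₂
    apply le_antisymm
    · have h1 : c z₁ z₂ ≤ c z₁ z₂ ⊓ b (g z₁) (g z₂) :=
        le_inf le_rfl (hgfun z₁ z₂)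
      refine h1.trans ?_
      rw [hffinal, hframe]
      apply iSup₂_le
      rintro v ⟨x₁, x₂, h1', h2', rfl⟩
      apply le_sSup
      exact ⟨x₁, x₂, h1', h2', by rw [inf_comm]⟩
    · apply sSup_le
      rintro v ⟨x₁, x₂, h1', h2', rfl⟩
      exact inf_le_right
end
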